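/- Let D₁, D₂, D₃ be three pairwise vertex-disjoint digraphs, each with a Hamiltonian cycle, and let D be a generalized sum of D₁, D₂, D₃. If there is a cyclic ordering (i₁, i₂, i₃) of {1,2,3} such that in D all exterior arcs go from D_{i₁} to D_{i₂}, from D_{i₂} to D_{i₃}, and from D_{i₃} to D_{i₁} (i.e., D_{i₁} ↦ D_{i₂}, D_{i₂} ↦ D_{i₃}, D_{i₃} ↦ D_{i₁}), then D is vertex-pancyclic. -/

import Mathlib

/-!
Let `v` lie in `D_{i₁}` and `3 ≤ k ≤ |V|`. Split `k = a₁ + a₂ + a₃` with `1 ≤ aⱼ ≤ |D_{iⱼ}|`.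
Following the Hamiltonian cycle of `D_{i₁}` for `a₁` vertices starting at `v`, then that of
`D_{i₂}` for `a₂` vertices, then that of `D_{i₃}` for `a₃` vertices gives a path: the exterior
arcs it uses go forward along `D_{i₁} ↦ D_{i₂} ↦ D_{i₃}`, and `D_{i₃} ↦ D_{i₁}` closes it into a
cycle of length `k` through `v`.
-/

/-- A directed cycle of length `k` passing through `v`. -/
def CycleThru {V : Type*} (A : V → V → Prop) (k : ℕ) (v : V) : Prop :=
  ∃ z : ZMod k → V, Function.Injective z ∧ (∀ i, A (z i) (z (i + 1))) ∧ ∃ i, z i = v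

/-- `D` is a generalized sum with vertex set `U` of the family of induced subdigraphs on
the sets `S i`: the parts are pairwise disjoint, cover `U`, and between vertices of
different parts there is exactly one arc. -/
def GenSumFam {V ι : Type*} (A : V → V → Prop) (U : Set V) (S : ι → Set V) : Prop :=
  (Pairwise fun i j => Disjoint (S i) (S j)) ∧ (⋃ i, S i) = U ∧
    ∀ i j, i ≠ j → ∀ u ∈ S i, ∀ v ∈ S j, Xor' (A u v) (A v u)

/-- The set `s` carries a Hamiltonian (spanning) directed cycle. -/
def HamOn {V : Type*} (A : V → V → Prop) (s : Set V) : Prop :=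
  ∃ n : ℕ, 2 ≤ n ∧ ∃ z : ZMod n → V, Function.Injective z ∧
    (∀ i, A (z i) (z (i + 1))) ∧ Set.range z = s

/-- `s ↦ t`: every vertex of `s` sends an arc to every vertex of `t`,
and there are no arcs from `t` to `s`. -/
def MWhole {V : Type*} (A : V → V → Prop) (s t : Set V) : Prop :=
  ∀ u ∈ s, ∀ v ∈ t, A u v ∧ ¬ A v u

section

variable {V : Type*} {A : V → V → Prop}

lemma ZMod.val_add_one_eq {k : ℕ} [NeZero k] (i : ZMod k) : (i + 1).val = (i.val + 1) % k := by
  rw [← ZMod.natCast_zmod_val i, ← Nat.cast_succ, ZMod.val_natCast, ZMod.val_natCast,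
    Nat.mod_eq_of_lt (ZMod.val_lt i)]

lemma List.IsChain.rel_getElem_succ_mod {l : List V} (hc : l.IsChain A)
    (hclose : ∀ x ∈ l.getLast?, ∀ y ∈ l.head?, A x y) {m : ℕ} (hm : m < l.length) :
    A l[m] (l[(m + 1) % l.length]'(Nat.mod_lt _ (by omega))) := by
  rcases Nat.lt_or_ge (m + 1) l.length with hlt | hge
  · simp only [Nat.mod_eq_of_lt hlt]
    exact List.isChain_iff_getElem.1 hc _ hlt
  · have hlast : m + 1 = l.length := by omega
    simp only [hlast, Nat.mod_self]
    exact hclose _ (by simp [List.getLast?_eq_getElem?, ← hlast]) _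
      (by simp [List.head?_eq_getElem?])

lemma cycleThru_of_isChain {l : List V} (hnd : l.Nodup) (hc : l.IsChain A)
    (hclose : ∀ x ∈ l.getLast?, ∀ y ∈ l.head?, A x y) {v : V} (hv : v ∈ l) :
    CycleThru A l.length v := by
  have : NeZero l.length := ⟨(List.length_pos_of_mem hv).ne'⟩
  refine ⟨fun i => l[i.val]'(ZMod.val_lt i), fun i j h => ZMod.val_injective _
    (hnd.getElem_inj_iff.1 h), fun i => ?_, ?_⟩
  · simpa only [ZMod.val_add_one_eq] using hc.rel_getElem_succ_mod hclose (ZMod.val_lt i)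
  · obtain ⟨m, hm, rfl⟩ := List.getElem_of_mem hv
    exact ⟨m, by simp [ZMod.val_cast_of_lt hm]⟩

def IsPathIn (A : V → V → Prop) (s : Set V) (l : List V) : Prop :=
  l.Nodup ∧ l.IsChain A ∧ ∀ x ∈ l, x ∈ s

lemma IsPathIn.append {s t : Set V} {l l' : List V} (h : IsPathIn A s l) (h' : IsPathIn A t l')
    (hst : Disjoint s t) (hjoin : ∀ x ∈ l.getLast?, ∀ y ∈ l'.head?, A x y) :
    IsPathIn A (s ∪ t) (l ++ l') := by
  refine ⟨List.nodup_append.2 ⟨h.1, h'.1, ?_⟩, h.2.1.append h'.2.1 hjoin, ?_⟩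
  · rintro x hx y hy rfl
    exact hst.notMem_of_mem_left (h.2.2 x hx) (h'.2.2 x hy)
  · exact fun x hx => (List.mem_append.1 hx).imp (h.2.2 x) (h'.2.2 x)

lemma MWhole.disjoint {s t : Set V} (h : MWhole A s t) : Disjoint s t :=
  Set.disjoint_left.2 fun x hs ht => (h x hs x ht).2 (h x hs x ht).1

lemma MWhole.rel_getLast?_head? {s t : Set V} {l l' : List V} (h : MWhole A s t)
    (hl : ∀ x ∈ l, x ∈ s) (hl' : ∀ y ∈ l', y ∈ t) :
    ∀ x ∈ l.getLast?, ∀ y ∈ l'.head?, A x y := fun x hx y hy =>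
  (h x (hl x (List.mem_of_getLast? hx)) y (hl' y (List.mem_of_mem_head? hy))).1

lemma HamOn.two_le_ncard {s : Set V} (h : HamOn A s) : 2 ≤ s.ncard := by
  obtain ⟨n, hn, z, hz, -, rfl⟩ := h
  rwa [Set.ncard_range_of_injective hz, Nat.card_zmod]

lemma HamOn.exists_isPathIn {s : Set V} (h : HamOn A s) {v : V} (hv : v ∈ s) {a : ℕ}
    (ha₀ : 1 ≤ a) (ha : a ≤ s.ncard) : ∃ l, IsPathIn A s l ∧ l.length = a ∧ v ∈ l := by
  obtain ⟨n, -, z, hz, harc, rfl⟩ := h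
  obtain ⟨i, rfl⟩ := hv
  rw [Set.ncard_range_of_injective hz, Nat.card_zmod] at ha
  refine ⟨List.ofFn fun t : Fin a => z (i + t.val), ⟨List.nodup_ofFn.2 ?_, List.isChain_ofFn.2 ?_,
    ?_⟩, List.length_ofFn, List.mem_ofFn.2 ⟨⟨0, ha₀⟩, by simp⟩⟩
  · intro t t' htt'
    have := congrArg ZMod.val (add_left_cancel (hz htt'))
    rw [ZMod.val_cast_of_lt (by omega), ZMod.val_cast_of_lt (by omega)] at this
    exact Fin.ext this
  · intro t _
    simpa [add_assoc] using harc (i + t)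
  · simp only [List.mem_ofFn, Set.mem_range]
    rintro x ⟨t, rfl⟩
    exact ⟨_, rfl⟩

lemma cycleThru_of_three_paths {s₀ s₁ s₂ : Set V} (h₀₁ : MWhole A s₀ s₁) (h₁₂ : MWhole A s₁ s₂)
    (h₂₀ : MWhole A s₂ s₀) {l₀ l₁ l₂ : List V} (hl₀ : IsPathIn A s₀ l₀) (hl₁ : IsPathIn A s₁ l₁)
    (hl₂ : IsPathIn A s₂ l₂) (hne₁ : l₁ ≠ []) (hne₂ : l₂ ≠ []) {v : V} (hv : v ∈ l₀) :
    CycleThru A (l₀ ++ l₁ ++ l₂).length v := by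
  have hne₀ : l₀ ≠ [] := List.ne_nil_of_mem hv
  have hl₀₁ := hl₀.append hl₁ h₀₁.disjoint (h₀₁.rel_getLast?_head? hl₀.2.2 hl₁.2.2)
  have hl := hl₀₁.append hl₂ (Set.disjoint_union_left.2 ⟨h₂₀.disjoint.symm, h₁₂.disjoint⟩)
    (by rw [List.getLast?_append_of_ne_nil _ hne₁]; exact h₁₂.rel_getLast?_head? hl₁.2.2 hl₂.2.2)
  refine cycleThru_of_isChain hl.1 hl.2.1 ?_ (List.mem_append_left _ (List.mem_append_left _ hv))
  rw [List.getLast?_append_of_ne_nil _ hne₂, List.append_assoc,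
    List.head?_append_of_ne_nil _ hne₀]
  exact h₂₀.rel_getLast?_head? hl₂.2.2 hl₀.2.2

lemma exists_three_summands {n₀ n₁ n₂ k : ℕ} (h₀ : 1 ≤ n₀) (h₁ : 1 ≤ n₁) (h₂ : 1 ≤ n₂)
    (hk₃ : 3 ≤ k) (hk : k ≤ n₀ + n₁ + n₂) :
    ∃ a₀ a₁ a₂, 1 ≤ a₀ ∧ a₀ ≤ n₀ ∧ 1 ≤ a₁ ∧ a₁ ≤ n₁ ∧ 1 ≤ a₂ ∧ a₂ ≤ n₂ ∧ a₀ + a₁ + a₂ = k :=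
  -- fill the parts greedily, leaving room for at least one vertex in each later part
  ⟨min n₀ (k - 2), min n₁ (k - min n₀ (k - 2) - 1), k - min n₀ (k - 2) -
    min n₁ (k - min n₀ (k - 2) - 1), by omega⟩

theorem cycleThru_of_cyclic_mWhole (T : Fin 3 → Set V) (hT : ∀ t, MWhole A (T t) (T (t + 1)))
    (hham : ∀ t, HamOn A (T t)) {v : V} (hv : v ∈ T 0) {k : ℕ} (hk₃ : 3 ≤ k)
    (hk : k ≤ ∑ t, (T t).ncard) : CycleThru A k v := by
  rw [Fin.sum_univ_three] at hk
  obtain ⟨a₀, a₁, a₂, ha₀, ha₀', ha₁, ha₁', ha₂, ha₂', rfl⟩ := exists_three_summands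
    (by linarith [(hham 0).two_le_ncard]) (by linarith [(hham 1).two_le_ncard])
    (by linarith [(hham 2).two_le_ncard]) hk₃ hk
  obtain ⟨l₀, hl₀, rfl, hv₀⟩ := (hham 0).exists_isPathIn hv ha₀ ha₀'
  obtain ⟨w₁, hw₁⟩ := Set.nonempty_of_ncard_ne_zero (by omega : (T 1).ncard ≠ 0)
  obtain ⟨w₂, hw₂⟩ := Set.nonempty_of_ncard_ne_zero (by omega : (T 2).ncard ≠ 0)
  obtain ⟨l₁, hl₁, rfl, hw₁⟩ := (hham 1).exists_isPathIn hw₁ ha₁ ha₁'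
  obtain ⟨l₂, hl₂, rfl, hw₂⟩ := (hham 2).exists_isPathIn hw₂ ha₂ ha₂'
  simpa only [List.length_append] using cycleThru_of_three_paths (hT 0) (hT 1) (hT 2)
    hl₀ hl₁ hl₂ (List.ne_nil_of_mem hw₁) (List.ne_nil_of_mem hw₂) hv₀

end

/-- A generalized sum of three Hamiltonian digraphs with a cyclic domination
ordering D_{i₁} ↦ D_{i₂} ↦ D_{i₃} ↦ D_{i₁} is vertex-pancyclic. -/
theorem stmt7 {V : Type*} [Fintype V] (A : V → V → Prop) (S : Fin 3 → Set V)
    (hgs : GenSumFam A Set.univ S) (hham : ∀ i, HamOn A (S i))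
    (σ : Equiv.Perm (Fin 3))
    (hcyc : ∀ j : Fin 3, MWhole A (S (σ j)) (S (σ (j + 1)))) :
    ∀ v : V, ∀ k : ℕ, 3 ≤ k → k ≤ Fintype.card V → CycleThru A k v := by
  intro v k hk₃ hk
  obtain ⟨-, hcover, -⟩ := hgs
  obtain ⟨i, hvi⟩ := Set.mem_iUnion.1 (hcover ▸ Set.mem_univ v)
  let e : Fin 3 ≃ Fin 3 := (Equiv.addLeft (σ.symm i)).trans σ
  refine cycleThru_of_cyclic_mWhole (S ∘ e)
    (fun t => by simpa [e, add_assoc] using hcyc (σ.symm i + t)) (fun t => hham _)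
    (by simpa [e] using hvi) hk₃ ?_
  calc k ≤ (⋃ i, S i).ncard := by rwa [hcover, Set.ncard_univ, Nat.card_eq_fintype_card]
    _ ≤ ∑ i, (S i).ncard := Set.ncard_iUnion_le_of_fintype S
    _ = ∑ t, (S (e t)).ncard := (e.sum_comp fun i => (S i).ncard).symm
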